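/- arXiv:math/0303274 — 4 statements merged into one kernel-verified Lean document; each statement's English description precedes it below -/
import Mathlib

section
/- Let D(t) be the diagonal matrix with entries e^{φ_1 t}, …, e^{φ_n t} where φ_1 ≥ … ≥ φ_n, and let g ∈ GL(n,ℝ). Denote by e^{τ_1(t)} ≥ … ≥ e^{τ_n(t)} the eigenvalues of the positive definite matrix μ(t) = g D(t) gᵀ. Then for each j, lim_{t→+∞} τ_j(t)/t = φ_j. -/
open Matrix Filter Real
open scoped MatrixOrder

/-!
Put `B = g⁻¹ g⁻ᵀ`, a positive definite matrix, and `D(t) = diag (e^{φᵢ t})`. For `x ≥ 0`,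
`∏ⱼ (x + e^{τⱼ(t)}) = det (x + μ(t)) = det(g)² det (x B + D(t))`. Conjugated by
`diag (max (x, e^{φᵢ t}))^{-1/2}`, the matrix `x B + D(t)` lies between two fixed positive multiples
of the identity, so both sides agree with `∏ᵢ max (x, e^{φᵢ t})` up to bounded factors. With
`x = e^{st}` this says that `∑ⱼ max (s t, τⱼ(t)) - t ∑ᵢ max (s, φᵢ)` stays bounded, hence
`∑ⱼ max (s, τⱼ(t)/t) → ∑ᵢ max (s, φᵢ)` for every `s`. For a sorted vector `v` the slope of the
piecewise linear function `s ↦ ∑ᵢ max (s, vᵢ)` counts the entries of `v` below `s`, so the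
convergence of these functions forces the convergence of each coordinate.
-/

section SumMax

variable {ι : Type*} [Fintype ι] [LinearOrder ι]

lemma sum_max_sub_sum_max_add_le {v w : ι → ℝ} (hv : Antitone v) (hw : Antitone w) {a b : ℝ}
    (hab : a ≤ b) {j : ι} (hvj : b ≤ v j) (hwj : w j ≤ a) :
    (∑ i, max b (v i) - ∑ i, max a (v i)) + (b - a) ≤
      ∑ i, max b (w i) - ∑ i, max a (w i) := by
  classical
  suffices ∑ i, (max b (v i) - max a (v i) + if i = j then b - a else 0) ≤
      ∑ i, (max b (w i) - max a (w i)) by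
    simpa [Finset.sum_add_distrib, Finset.sum_sub_distrib] using this
  refine Finset.sum_le_sum fun i _ => ?_
  rcases lt_trichotomy i j with h | rfl | h
  · have := hv h.le
    simp only [h.ne, if_false, max_def]
    split_ifs <;> linarith
  · simp only [if_true, max_def]
    split_ifs <;> linarith
  · have := hw h.le
    simp only [h.ne', if_false, max_def]
    split_ifs <;> linarith

theorem tendsto_apply_of_tendsto_sum_max {α : Type*} {l : Filter α} {φ : ι → ℝ}
    (hφ : Antitone φ) {u : α → ι → ℝ} (hu : ∀ᶠ t in l, Antitone (u t))
    (h : ∀ s, Tendsto (fun t => ∑ i, max s (u t i)) l (nhds (∑ i, max s (φ i)))) (j : ι) :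
    Tendsto (fun t => u t j) l (nhds (φ j)) := by
  have hincr : ∀ a b, Tendsto (fun t => ∑ i, max b (u t i) - ∑ i, max a (u t i)) l
      (nhds (∑ i, max b (φ i) - ∑ i, max a (φ i))) := fun a b => (h b).sub (h a)
  refine tendsto_order.2 ⟨fun a ha => ?_, fun b hb => ?_⟩
  · filter_upwards [hu, (hincr a (φ j)).eventually_lt_const (lt_add_of_pos_right _ (sub_pos.2 ha))]
      with t hut ht
    by_contra! hle
    linarith [sum_max_sub_sum_max_add_le hφ hut ha.le le_rfl hle]
  · filter_upwards [hu, (hincr (φ j) b).eventually_const_lt (sub_lt_self _ (sub_pos.2 hb))]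
      with t hut ht
    by_contra! hle
    linarith [sum_max_sub_sum_max_add_le hut hφ hb.le hle le_rfl]

end SumMax

lemma tendsto_div_of_exp_bounds {f : ℝ → ℝ} {a c C : ℝ} (hc : 0 < c) (hC : 0 < C)
    (h : ∀ᶠ t in atTop, c * exp (a * t) ≤ exp (f t) ∧ exp (f t) ≤ C * exp (a * t)) :
    Tendsto (fun t => f t / t) atTop (nhds a) := by
  have hlim : ∀ K : ℝ, Tendsto (fun t => K / t + a) atTop (nhds a) := fun K => by
    simpa using (tendsto_const_nhds.div_atTop tendsto_id).add (tendsto_const_nhds (x := a))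
  refine tendsto_of_tendsto_of_tendsto_of_le_of_le' (hlim (log c)) (hlim (log C)) ?_ ?_
    <;> filter_upwards [h, eventually_gt_atTop 0] with t ht htpos
  · rw [div_add' _ _ _ htpos.ne', div_le_div_iff_of_pos_right htpos, ← exp_le_exp, exp_add,
      exp_log hc]
    exact ht.1
  · rw [div_add' _ _ _ htpos.ne', div_le_div_iff_of_pos_right htpos, ← exp_le_exp, exp_add,
      exp_log hC]
    exact ht.2

section ProdMax

variable {ι : Type*} [Fintype ι]

lemma prod_max_le_prod_add {x : ℝ} {v : ι → ℝ} (hx : 0 ≤ x) (hv : ∀ i, 0 ≤ v i) :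
    ∏ i, max x (v i) ≤ ∏ i, (x + v i) :=
  Finset.prod_le_prod (fun _ _ => le_max_of_le_left hx) fun i _ => max_le_add_of_nonneg hx (hv i)

lemma prod_add_le_two_pow_mul_prod_max {x : ℝ} {v : ι → ℝ} (hx : 0 ≤ x) (hv : ∀ i, 0 ≤ v i) :
    ∏ i, (x + v i) ≤ 2 ^ Fintype.card ι * ∏ i, max x (v i) := by
  rw [← Finset.card_univ, ← Finset.prod_const, ← Finset.prod_mul_distrib]
  refine Finset.prod_le_prod (fun i _ => add_nonneg hx (hv i)) fun i _ => ?_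
  linarith [le_max_left x (v i), le_max_right x (v i)]

end ProdMax

namespace Matrix

variable {ι : Type*} [Fintype ι] [DecidableEq ι]

lemma det_smul_one_add_eq_prod_of_charpoly_roots {R : Type*} [CommRing R] [IsDomain R]
    {M : Matrix ι ι R} {r : ι → R} (h : M.charpoly.roots = Finset.univ.val.map r) (x : R) :
    det (x • 1 + M) = ∏ i, (x + r i) := by
  have hcard : M.charpoly.roots.card = M.charpoly.natDegree := by
    rw [h, charpoly_natDegree_eq_dim]; simp
  have hprod := Polynomial.prod_multiset_X_sub_C_of_monic_of_roots_card_eq M.charpoly_monic hcard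
  rw [h, Multiset.map_map] at hprod
  have heval := congr_arg (Polynomial.eval (-x)) hprod
  rw [eval_charpoly, ← Finset.prod_eq_multiset_prod, Polynomial.eval_prod] at heval
  have hneg : x • (1 : Matrix ι ι R) + M = -(scalar ι (-x) - M) := by
    rw [neg_sub, scalar_apply, ← smul_one_eq_diagonal, neg_smul, sub_neg_eq_add, add_comm]
  rw [hneg, det_neg, ← heval, ← Finset.card_univ, ← Finset.prod_neg]
  simp [add_comm]

lemma IsHermitian.smul_one_le_iff {A : Matrix ι ι ℝ} (hA : A.IsHermitian) {c : ℝ} :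
    c • 1 ≤ A ↔ ∀ i, c ≤ hA.eigenvalues i := by
  rw [← Algebra.algebraMap_eq_smul_one, algebraMap_le_iff_le_spectrum hA.isSelfAdjoint,
    hA.spectrum_real_eq_range_eigenvalues, Set.forall_mem_range]

lemma IsHermitian.le_smul_one_iff {A : Matrix ι ι ℝ} (hA : A.IsHermitian) {c : ℝ} :
    A ≤ c • 1 ↔ ∀ i, hA.eigenvalues i ≤ c := by
  rw [← Algebra.algebraMap_eq_smul_one, le_algebraMap_iff_spectrum_le hA.isSelfAdjoint,
    hA.spectrum_real_eq_range_eigenvalues, Set.forall_mem_range]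

lemma PosDef.exists_smul_one_le_le_smul_one [Nonempty ι] {B : Matrix ι ι ℝ} (hB : B.PosDef) :
    ∃ β β' : ℝ, 0 < β ∧ 0 < β' ∧ β • 1 ≤ B ∧ B ≤ β' • 1 := by
  obtain ⟨i₀, hi₀⟩ := Finite.exists_min hB.1.eigenvalues
  obtain ⟨β', hβ'⟩ := Finite.exists_le hB.1.eigenvalues
  exact ⟨_, β', hB.eigenvalues_pos i₀, (hB.eigenvalues_pos i₀).trans_le (hβ' i₀),
    hB.1.smul_one_le_iff.2 hi₀, hB.1.le_smul_one_iff.2 hβ'⟩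

lemma det_mem_Icc_of_smul_one_le_le_smul_one {A : Matrix ι ι ℝ} {c C : ℝ} (hc : 0 ≤ c)
    (hcA : c • 1 ≤ A) (hAC : A ≤ C • 1) :
    A.det ∈ Set.Icc (c ^ Fintype.card ι) (C ^ Fintype.card ι) := by
  have hA : A.IsHermitian := by
    simpa using hcA.isHermitian.add (isHermitian_one.smul (IsSelfAdjoint.all c))
  rw [hA.smul_one_le_iff] at hcA
  rw [hA.le_smul_one_iff] at hAC
  rw [hA.det_eq_prod_eigenvalues]
  simp only [RCLike.ofReal_real_eq_id, id]
  refine ⟨?_, ?_⟩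
  · calc c ^ Fintype.card ι = ∏ _i : ι, c := by simp
      _ ≤ _ := Finset.prod_le_prod (fun _ _ => hc) fun i _ => hcA i
  · calc ∏ i, hA.eigenvalues i ≤ ∏ _i : ι, C :=
          Finset.prod_le_prod (fun i _ => hc.trans (hcA i)) fun i _ => hAC i
      _ = C ^ Fintype.card ι := by simp

omit [Fintype ι] in
lemma diagonal_le_diagonal {f g : ι → ℝ} (h : ∀ i, f i ≤ g i) : diagonal f ≤ diagonal g := by
  rw [Matrix.le_iff, diagonal_sub, posSemidef_diagonal_iff]
  exact fun i => sub_nonneg.2 (h i)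

lemma diagonal_inv_sqrt_mul_mul (m f : ι → ℝ) (hm : ∀ i, 0 ≤ m i) :
    diagonal (fun i => (√(m i))⁻¹) * diagonal f * diagonal (fun i => (√(m i))⁻¹) =
      diagonal (fun i => f i / m i) := by
  rw [diagonal_mul_diagonal, diagonal_mul_diagonal]
  congr 1; funext i
  rw [mul_comm, ← mul_assoc, ← mul_inv, Real.mul_self_sqrt (hm i), inv_mul_eq_div]

lemma det_eq_det_diagonal_inv_sqrt_mul_mul {m : ι → ℝ} (hm : ∀ i, 0 < m i)
    (A : Matrix ι ι ℝ) :
    det A = det (diagonal (fun i => (√(m i))⁻¹) * A * diagonal (fun i => (√(m i))⁻¹)) *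
      ∏ i, m i := by
  have hS : (∏ i, (√(m i))⁻¹) * (∏ i, (√(m i))⁻¹) * ∏ i, m i = 1 := by
    rw [← Finset.prod_mul_distrib, ← Finset.prod_mul_distrib]
    refine Finset.prod_eq_one fun i _ => ?_
    rw [← mul_inv, mul_self_sqrt (hm i).le, inv_mul_cancel₀ (hm i).ne']
  rw [det_mul, det_mul, det_diagonal]
  linear_combination -(det A) * hS

theorem PosDef.exists_det_smul_add_diagonal_bounds [Nonempty ι] {B : Matrix ι ι ℝ}
    (hB : B.PosDef) :
    ∃ c C : ℝ, 0 < c ∧ 0 < C ∧ ∀ x : ℝ, 0 ≤ x → ∀ d : ι → ℝ, (∀ i, 0 < d i) →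
      c * ∏ i, max x (d i) ≤ det (x • B + diagonal d) ∧
        det (x • B + diagonal d) ≤ C * ∏ i, max x (d i) := by
  obtain ⟨β, β', hβ, hβ', hβB, hBβ'⟩ := hB.exists_smul_one_le_le_smul_one
  refine ⟨min β 1 ^ Fintype.card ι, (β' + 1) ^ Fintype.card ι, by positivity, by positivity,
    fun x hx d hd => ?_⟩
  set m : ι → ℝ := fun i => max x (d i)
  have hm : ∀ i, 0 < m i := fun i => (hd i).trans_le (le_max_right _ _)
  set S : Matrix ι ι ℝ := diagonal fun i => (√(m i))⁻¹
  have hconj (γ : ℝ) :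
      S * (x • γ • 1 + diagonal d) * S = diagonal fun i => (x * γ + d i) / m i := by
    rw [smul_smul, smul_one_eq_diagonal, diagonal_add,
      diagonal_inv_sqrt_mul_mul _ _ fun i => (hm i).le]
  have hmono : ∀ {P Q : Matrix ι ι ℝ}, P ≤ Q → S * P * S ≤ S * Q * S := fun h => by
    simpa only [star_eq_conjTranspose, S, (isHermitian_diagonal _).eq] using
      star_left_conjugate_le_conjugate h S
  have hlow : min β 1 • 1 ≤ S * (x • B + diagonal d) * S := by
    calc min β 1 • (1 : Matrix ι ι ℝ) = diagonal fun _ => min β 1 := smul_one_eq_diagonal _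
      _ ≤ diagonal fun i => (x * β + d i) / m i := diagonal_le_diagonal fun i => by
          rw [le_div_iff₀ (hm i)]
          calc min β 1 * m i ≤ min β 1 * (x + d i) :=
                mul_le_mul_of_nonneg_left (max_le_add_of_nonneg hx (hd i).le) (by positivity)
            _ ≤ x * β + d i := by nlinarith [min_le_left β 1, min_le_right β 1, hd i]
      _ = S * (x • β • 1 + diagonal d) * S := (hconj β).symm
      _ ≤ S * (x • B + diagonal d) * S :=
          hmono (add_le_add_left (smul_le_smul_of_nonneg_left hβB hx) _)
  have hup : S * (x • B + diagonal d) * S ≤ (β' + 1) • 1 := by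
    calc S * (x • B + diagonal d) * S ≤ S * (x • β' • 1 + diagonal d) * S :=
          hmono (add_le_add_left (smul_le_smul_of_nonneg_left hBβ' hx) _)
      _ = diagonal fun i => (x * β' + d i) / m i := hconj β'
      _ ≤ diagonal fun _ => β' + 1 := diagonal_le_diagonal fun i => by
          rw [div_le_iff₀ (hm i)]
          nlinarith [le_max_left x (d i), le_max_right x (d i)]
      _ = (β' + 1) • 1 := (smul_one_eq_diagonal _).symm
  obtain ⟨h₁, h₂⟩ := det_mem_Icc_of_smul_one_le_le_smul_one (by positivity) hlow hup
  have hmpos : 0 < ∏ i, m i := Finset.prod_pos fun i _ => hm i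
  rw [det_eq_det_diagonal_inv_sqrt_mul_mul hm]
  exact ⟨mul_le_mul_of_nonneg_right h₁ hmpos.le, mul_le_mul_of_nonneg_right h₂ hmpos.le⟩

lemma posDef_inv_mul_inv_transpose {g : Matrix ι ι ℝ} (hg : IsUnit g) : (g⁻¹ * g⁻¹ᵀ).PosDef := by
  simpa [conjTranspose_eq_transpose_of_trivial] using
    PosDef.mul_conjTranspose_self g⁻¹ (vecMul_injective_iff_isUnit.2 (isUnit_nonsing_inv_iff.2 hg))

lemma det_smul_one_add_mul_diagonal_mul_transpose {g : Matrix ι ι ℝ} (hg : IsUnit g) (x : ℝ)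
    (d : ι → ℝ) :
    det (x • 1 + g * diagonal d * gᵀ) = det g ^ 2 * det (x • (g⁻¹ * g⁻¹ᵀ) + diagonal d) := by
  have hdet := (isUnit_iff_isUnit_det g).1 hg
  have hfac : x • 1 + g * diagonal d * gᵀ = g * (x • (g⁻¹ * g⁻¹ᵀ) + diagonal d) * gᵀ := by
    rw [Matrix.mul_add, Matrix.add_mul, Matrix.mul_smul, Matrix.smul_mul, ← Matrix.mul_assoc,
      mul_nonsing_inv _ hdet, Matrix.one_mul, ← transpose_mul, mul_nonsing_inv _ hdet,
      transpose_one]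
  rw [hfac, det_mul, det_mul, det_transpose]
  ring

end Matrix

section Eigenvalues

variable {ι : Type*} [Fintype ι] [DecidableEq ι]

theorem exists_prod_add_exp_eigenvalue_bounds [Nonempty ι] {φ : ι → ℝ}
    {g : Matrix ι ι ℝ} (hg : IsUnit g) {τ : ℝ → ι → ℝ}
    (hτ : ∀ t, (g * diagonal (fun i => exp (φ i * t)) * gᵀ).charpoly.roots =
      Finset.univ.val.map fun j => exp (τ t j)) :
    ∃ c C : ℝ, 0 < c ∧ 0 < C ∧ ∀ t x : ℝ, 0 ≤ x →
      c * ∏ i, max x (exp (φ i * t)) ≤ ∏ j, (x + exp (τ t j)) ∧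
        ∏ j, (x + exp (τ t j)) ≤ C * ∏ i, max x (exp (φ i * t)) := by
  obtain ⟨c, C, hc, hC, hB⟩ := (posDef_inv_mul_inv_transpose hg).exists_det_smul_add_diagonal_bounds
  have hg2 : 0 < det g ^ 2 := by
    have := ((isUnit_iff_isUnit_det g).1 hg).ne_zero
    positivity
  refine ⟨det g ^ 2 * c, det g ^ 2 * C, mul_pos hg2 hc, mul_pos hg2 hC, fun t x hx => ?_⟩
  rw [← det_smul_one_add_eq_prod_of_charpoly_roots (hτ t),
    det_smul_one_add_mul_diagonal_mul_transpose hg, mul_assoc, mul_assoc]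
  obtain ⟨h₁, h₂⟩ := hB x hx _ fun i => exp_pos (φ i * t)
  exact ⟨mul_le_mul_of_nonneg_left h₁ hg2.le, mul_le_mul_of_nonneg_left h₂ hg2.le⟩

theorem tendsto_sum_max_div_eigenvalue_exponents [Nonempty ι] {φ : ι → ℝ}
    {g : Matrix ι ι ℝ} (hg : IsUnit g) {τ : ℝ → ι → ℝ}
    (hτ : ∀ t, (g * diagonal (fun i => exp (φ i * t)) * gᵀ).charpoly.roots =
      Finset.univ.val.map fun j => exp (τ t j)) (s : ℝ) :
    Tendsto (fun t => ∑ j, max s (τ t j / t)) atTop (nhds (∑ i, max s (φ i))) := by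
  obtain ⟨c, C, hc, hC, h⟩ := exists_prod_add_exp_eigenvalue_bounds hg hτ
  have hexp (v : ι → ℝ) (t : ℝ) :
      exp (∑ i, max (s * t) (v i)) = ∏ i, max (exp (s * t)) (exp (v i)) := by
    simp only [exp_sum, exp_monotone.map_max]
  refine (tendsto_div_of_exp_bounds (f := fun t => ∑ j, max (s * t) (τ t j))
    (c := c / 2 ^ Fintype.card ι) (by positivity) hC ?_).congr' ?_
  · filter_upwards [eventually_ge_atTop 0] with t ht
    have hφ : exp ((∑ i, max s (φ i)) * t) = ∏ i, max (exp (s * t)) (exp (φ i * t)) := by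
      rw [Finset.sum_mul, ← hexp]
      simp only [max_mul_of_nonneg _ _ ht]
    obtain ⟨h₁, h₂⟩ := h t (exp (s * t)) (exp_pos _).le
    rw [hφ, hexp]
    constructor
    · rw [div_mul_eq_mul_div, div_le_iff₀ (by positivity), mul_comm _ (2 ^ _)]
      exact h₁.trans (prod_add_le_two_pow_mul_prod_max (exp_pos _).le fun _ => (exp_pos _).le)
    · exact (prod_max_le_prod_add (exp_pos _).le fun _ => (exp_pos _).le).trans h₂
  · filter_upwards [eventually_gt_atTop 0] with t ht
    rw [Finset.sum_div]
    simp only [← max_div_div_right ht.le, mul_div_cancel_right₀ _ ht.ne']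

end Eigenvalues

/-- Let `μ(t) = g D(t) gᵀ` with `D(t) = diag(e^{φ₁ t},…,e^{φₙ t})`, `φ₁ ≥ … ≥ φₙ`,
and `g` invertible. If `e^{τ₁(t)} ≥ … ≥ e^{τₙ(t)}` are the eigenvalues of `μ(t)`,
then `τⱼ(t)/t → φⱼ` as `t → +∞`. -/
theorem eigenvalue_growth_of_geodesic (n : ℕ)
    (φ : Fin n → ℝ) (hφ : Antitone φ)
    (g : Matrix (Fin n) (Fin n) ℝ) (hg : IsUnit g)
    (μ : ℝ → Matrix (Fin n) (Fin n) ℝ)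
    (hμ : ∀ t : ℝ, μ t = g * Matrix.diagonal (fun i => Real.exp (φ i * t)) * gᵀ)
    (τ : ℝ → Fin n → ℝ)
    (hτa : ∀ t, Antitone (τ t))
    (hτ : ∀ t, Multiset.ofList (List.ofFn fun j => Real.exp (τ t j))
            = (μ t).charpoly.roots) :
    ∀ j : Fin n, Tendsto (fun t => τ t j / t) atTop (nhds (φ j)) := by
  intro j
  have : Nonempty (Fin n) := ⟨j⟩
  have hroots : ∀ t, (g * diagonal (fun i => exp (φ i * t)) * gᵀ).charpoly.roots =
      Finset.univ.val.map fun j => exp (τ t j) := fun t => by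
    rw [← hμ t, ← hτ t, Fin.univ_val_map]
  refine tendsto_apply_of_tendsto_sum_max hφ ?_
    (tendsto_sum_max_div_eigenvalue_exponents hg hroots) j
  filter_upwards [eventually_gt_atTop 0] with t ht i k hik
  exact div_le_div_of_nonneg_right (hτa t hik) ht.le
end

section
/- For each positive definite symmetric matrix X and each real tuple φ_1 ≥ … ≥ φ_n, there exists exactly one geodesic of the form μ(t) = h·diag(e^{φ_1 t},…,e^{φ_n t})·hᵀ with h block lower triangular (blocks determined by equalities among φ_j) passing through X; i.e., through each point of E_n there passes a unique geodesic of a given finite pencil. -/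
/-!
Existence is the Cholesky factorisation `X = L Lᵀ` obtained from the LDL decomposition: `L` is
lower triangular, hence block lower triangular for the antitone `φ`, and one takes `t₀ = 0`.
For uniqueness, `g = h₂⁻¹ h₁` is block lower triangular with `g γ(t₁) gᵀ = γ(t₂)`. Then
`gᵀ = γ(t₁)⁻¹ g⁻¹ γ(t₂)` is block lower triangular as well, so `g` is block diagonal and commutes
with every `γ(t)`, whence `h₁ γ(t + t₁) h₁ᵀ = h₂ γ(t) (g γ(t₁) gᵀ) h₂ᵀ = h₂ γ(t + t₂) h₂ᵀ`.
-/

open Matrix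

namespace Matrix

theorem PosDef.exists_isUnit_blockTriangular_toDual_mul_transpose_eq {ι : Type*} [Fintype ι]
    [LinearOrder ι] [WellFoundedLT ι] [LocallyFiniteOrderBot ι]
    {S : Matrix ι ι ℝ} (hS : S.PosDef) :
    ∃ L : Matrix ι ι ℝ, IsUnit L ∧ L.BlockTriangular OrderDual.toDual ∧ L * Lᵀ = S := by
  have hdiag : (LDL.diag hS).PosDef := by
    rw [LDL.diag_eq_lowerInv_conj]
    exact hS.mul_mul_conjTranspose_same (vecMul_injective_iff_isUnit.mpr (isUnit_of_invertible _))
  have hpos : ∀ i, 0 < LDL.diagEntries hS i := posDef_diagonal_iff.mp hdiag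
  set s : ι → ℝ := fun i => √(LDL.diagEntries hS i)
  have hss : diagonal s * diagonal s = LDL.diag hS := by
    rw [diagonal_mul_diagonal, LDL.diag]
    exact congrArg diagonal (funext fun i => Real.mul_self_sqrt (hpos i).le)
  refine ⟨LDL.lower hS * diagonal s, ?_, ?_, ?_⟩
  · refine (isUnit_nonsing_inv_iff.mpr (isUnit_of_invertible _)).mul (isUnit_diagonal.mpr ?_)
    exact Pi.isUnit_iff.mpr fun i => (Real.sqrt_pos.mpr (hpos i)).ne'.isUnit
  · have hL : (LDL.lowerInv hS).BlockTriangular OrderDual.toDual := fun _ _ hij =>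
      LDL.lowerInv_triangular hS hij
    exact (blockTriangular_inv_of_blockTriangular hL).mul (blockTriangular_diagonal _)
  · calc LDL.lower hS * diagonal s * (LDL.lower hS * diagonal s)ᵀ
        = LDL.lower hS * (diagonal s * diagonal s) * (LDL.lower hS)ᴴ := by
          rw [transpose_mul, diagonal_transpose, conjTranspose_eq_transpose_of_trivial]
          simp only [Matrix.mul_assoc]
      _ = S := by rw [hss, LDL.lower_conj_diag]

variable {ι : Type*} [DecidableEq ι]

noncomputable def expDiagonal (φ : ι → ℝ) (t : ℝ) : Matrix ι ι ℝ :=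
  diagonal fun i => Real.exp (φ i * t)

theorem expDiagonal_zero (φ : ι → ℝ) : expDiagonal φ 0 = 1 := by
  simp [expDiagonal]

variable [Fintype ι] {α K : Type*}

theorem BlockTriangular.eq_zero_of_mul_diagonal_mul_transpose_eq_diagonal [Field K]
    [LinearOrder α] {b : ι → α} {g : Matrix ι ι K} (hg : g.BlockTriangular b) (hgu : IsUnit g)
    {d d' : ι → K} (hd : ∀ i, d i ≠ 0) (h : g * diagonal d * gᵀ = diagonal d')
    {i j : ι} (hij : b i ≠ b j) : g i j = 0 := by
  have := hgu.invertible
  have hgT : gᵀ = diagonal d⁻¹ * (g⁻¹ * diagonal d') := by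
    rw [← h, Matrix.mul_assoc g, inv_mul_cancel_left_of_invertible, ← Matrix.mul_assoc,
      diagonal_mul_diagonal]
    simp [hd]
  have hgT_tri : gᵀ.BlockTriangular b := hgT ▸ (blockTriangular_diagonal _).mul
    ((blockTriangular_inv_of_blockTriangular hg).mul (blockTriangular_diagonal _))
  rcases hij.lt_or_gt with hlt | hgt
  · simpa using hgT_tri.transpose (i := i) (j := j) hlt
  · exact hg hgt

theorem commute_diagonal_comp_of_eq_zero [CommSemiring K] {b : ι → α} {g : Matrix ι ι K}
    (hg : ∀ ⦃i j⦄, b i ≠ b j → g i j = 0) (f : α → K) :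
    Commute g (diagonal (f ∘ b)) := by
  ext i j
  rw [mul_diagonal, diagonal_mul, Function.comp_apply, Function.comp_apply]
  by_cases hij : b i = b j
  · rw [hij, mul_comm]
  · simp [hg hij]

theorem expDiagonal_add (φ : ι → ℝ) (s t : ℝ) :
    expDiagonal φ (s + t) = expDiagonal φ s * expDiagonal φ t := by
  simp only [expDiagonal, diagonal_mul_diagonal, mul_add, Real.exp_add]

theorem BlockTriangular.mul_expDiagonal_add_mul_transpose {φ : ι → ℝ} {g : Matrix ι ι ℝ}
    (hg : g.BlockTriangular φ) (hgu : IsUnit g) {t₁ t₂ : ℝ}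
    (h : g * expDiagonal φ t₁ * gᵀ = expDiagonal φ t₂) (t : ℝ) :
    g * expDiagonal φ (t + t₁) * gᵀ = expDiagonal φ (t + t₂) := by
  have hblock : ∀ ⦃i j⦄, φ i ≠ φ j → g i j = 0 := fun _ _ =>
    hg.eq_zero_of_mul_diagonal_mul_transpose_eq_diagonal hgu (fun _ => (Real.exp_pos _).ne') h
  have hcomm : Commute g (expDiagonal φ t) :=
    commute_diagonal_comp_of_eq_zero hblock fun a => Real.exp (a * t)
  rw [expDiagonal_add, expDiagonal_add, ← h, ← Matrix.mul_assoc, hcomm.eq]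
  simp only [Matrix.mul_assoc]

theorem mul_expDiagonal_add_mul_transpose_eq {φ : ι → ℝ} {h₁ h₂ : Matrix ι ι ℝ}
    (hu₁ : IsUnit h₁) (hb₁ : h₁.BlockTriangular φ) (hu₂ : IsUnit h₂) (hb₂ : h₂.BlockTriangular φ)
    {t₁ t₂ : ℝ} (heq : h₁ * expDiagonal φ t₁ * h₁ᵀ = h₂ * expDiagonal φ t₂ * h₂ᵀ) (t : ℝ) :
    h₁ * expDiagonal φ (t + t₁) * h₁ᵀ = h₂ * expDiagonal φ (t + t₂) * h₂ᵀ := by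
  have := hu₂.invertible
  set g := h₂⁻¹ * h₁
  have hconj : ∀ A, h₁ * A * h₁ᵀ = h₂ * (g * A * gᵀ) * h₂ᵀ := fun A => by
    rw [← mul_inv_cancel_left_of_invertible h₂ h₁, transpose_mul]
    simp only [g, Matrix.mul_assoc]
  have hcancel : ∀ {A B}, h₂ * A * h₂ᵀ = h₂ * B * h₂ᵀ → A = B := fun hAB =>
    hu₂.mul_left_cancel (((isUnit_transpose h₂).mpr hu₂).mul_right_cancel hAB)
  have hg : g.BlockTriangular φ := (blockTriangular_inv_of_blockTriangular hb₂).mul hb₁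
  have hgu : IsUnit g := (isUnit_nonsing_inv_iff.mpr hu₂).mul hu₁
  rw [hconj] at heq ⊢
  rw [hg.mul_expDiagonal_add_mul_transpose hgu (hcancel heq)]

end Matrix

/-- Through each point `X` of the space of positive definite symmetric matrices there
passes exactly one geodesic of the finite pencil of
`γ(t) = diag(e^{φ₁ t},…,e^{φₙ t})` (`φ₁ ≥ … ≥ φₙ`): there exist a block lower
triangular invertible `h` (blocks given by equal values of `φ`) and a time `t₀` with
`h D(t₀) hᵀ = X`, and any two such geodesics coincide as parametrized curves up to the
time shift matching the passage through `X`. -/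
theorem unique_geodesic_of_finite_pencil_through_point (n : ℕ)
    (φ : Fin n → ℝ) (hφ : Antitone φ)
    (D : ℝ → Matrix (Fin n) (Fin n) ℝ)
    (hD : ∀ t, D t = Matrix.diagonal (fun i => Real.exp (φ i * t)))
    (X : Matrix (Fin n) (Fin n) ℝ) (hX : X.PosDef) :
    (∃ (h : Matrix (Fin n) (Fin n) ℝ) (t₀ : ℝ),
      IsUnit h ∧ (∀ i j : Fin n, φ j < φ i → h i j = 0) ∧ h * D t₀ * hᵀ = X) ∧
    (∀ (h₁ h₂ : Matrix (Fin n) (Fin n) ℝ) (t₁ t₂ : ℝ),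
      IsUnit h₁ → (∀ i j : Fin n, φ j < φ i → h₁ i j = 0) →
      IsUnit h₂ → (∀ i j : Fin n, φ j < φ i → h₂ i j = 0) →
      h₁ * D t₁ * h₁ᵀ = X → h₂ * D t₂ * h₂ᵀ = X →
      ∀ t : ℝ, h₁ * D (t + t₁) * h₁ᵀ = h₂ * D (t + t₂) * h₂ᵀ) := by
  obtain rfl : D = expDiagonal φ := funext hD
  refine ⟨?_, fun h₁ h₂ t₁ t₂ hu₁ hb₁ hu₂ hb₂ hX₁ hX₂ t => ?_⟩
  · obtain ⟨L, hLu, hL, rfl⟩ := hX.exists_isUnit_blockTriangular_toDual_mul_transpose_eq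
    exact ⟨L, 0, hLu, fun i j hij => hL (hφ.reflect_lt hij), by rw [expDiagonal_zero, mul_one]⟩
  · exact mul_expDiagonal_add_mul_transpose_eq hu₁ hb₁ hu₂ hb₂ (hX₁.trans hX₂.symm) t
end

section
/- Let X(z) be a matrix-valued function on an interval (0,ε) each of whose entries is given by a convergent Laurent series z^{-k}(a_0 + a_1 z + …), and suppose X(z) is symmetric positive definite for all z ∈ (0,ε). Then there exist integers k_1 ≥ k_2 ≥ … ≥ k_n and a matrix-valued function g(z), analytic in a neighborhood of 0 with g(0) invertible, such that X(z) = g(z)·diag(z^{-k_1},…,z^{-k_n})·g(z)ᵀ. -/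
/-!
Induction on the size. Among the diagonal entries pick one of least order `ν` at `0⁺`; since
`X i j ^ 2 ≤ X i i * X j j`, every entry then has order at least `ν`, so `X = z ^ ν • H` with `H`
analytic and `H 0 0` positive at `0`. One step of symmetric Gaussian elimination on this pivot gives
`X = L * diag(z ^ ν * H 0 0, S) * Lᵀ` with `L` unipotent and analytic, and the Schur complement `S`
is again a positive definite curve all of whose entries have order at least `ν`. By induction its
exponents are at most `-ν`, so prepending `-ν` keeps them antitone. Away from `0` only the identity
is required, and there a congruence through the matrix square root does the job.
-/

open Matrix Filter Set Topology

def RightOrderGE (m : ℤ) (f : ℝ → ℝ) : Prop :=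
  ∃ h : ℝ → ℝ, AnalyticAt ℝ h 0 ∧ ∀ᶠ z in 𝓝[>] (0:ℝ), f z = h z * z ^ m

lemma tendsto_zpow_nhdsGT_zero {j : ℤ} (hj : 0 < j) :
    Tendsto (fun z : ℝ => z ^ j) (𝓝[>] 0) (𝓝 0) := by
  lift j to ℕ using hj.le
  simpa using ((continuous_pow j).tendsto' 0 0 (zero_pow (by omega))).mono_left
    nhdsWithin_le_nhds

lemma le_of_eventually_mul_zpow_le {a b : ℝ → ℝ} {p q : ℤ} (ha : ContinuousAt a 0)
    (hb : ContinuousAt b 0) (ha0 : 0 < a 0)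
    (hle : ∀ᶠ z in 𝓝[>] (0:ℝ), a z * z ^ p ≤ b z * z ^ q) : q ≤ p := by
  by_contra! hpq
  have hlim : Tendsto (fun z => b z * z ^ (q - p)) (𝓝[>] 0) (𝓝 0) := by
    simpa using (hb.tendsto.mono_left nhdsWithin_le_nhds).mul
      (tendsto_zpow_nhdsGT_zero (sub_pos.2 hpq))
  have hle' : ∀ᶠ z in 𝓝[>] (0:ℝ), a z ≤ b z * z ^ (q - p) := by
    filter_upwards [hle, self_mem_nhdsWithin] with z hz (hz0 : 0 < z)
    rwa [zpow_sub₀ hz0.ne', ← mul_div_assoc, le_div_iff₀ (zpow_pos hz0 p)]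
  have ha' : Tendsto a (𝓝[>] 0) (𝓝 (a 0)) := ha.tendsto.mono_left nhdsWithin_le_nhds
  exact ha0.not_ge (le_of_tendsto_of_tendsto ha' hlim hle')

lemma eq_of_eventually_mul_zpow_eq {a b : ℝ → ℝ} {p : ℤ} (ha : ContinuousAt a 0)
    (hb : ContinuousAt b 0) (heq : ∀ᶠ z in 𝓝[>] (0:ℝ), a z * z ^ p = b z * z ^ p) :
    a 0 = b 0 := by
  refine tendsto_nhds_unique (ha.tendsto.mono_left (nhdsWithin_le_nhds (s := Ioi 0)))
    ((hb.tendsto.mono_left nhdsWithin_le_nhds).congr' ?_)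
  filter_upwards [heq, self_mem_nhdsWithin] with z hz (hz0 : 0 < z)
  exact (mul_right_cancel₀ (zpow_pos hz0 p).ne' hz).symm

namespace RightOrderGE

variable {m m' : ℤ} {f : ℝ → ℝ}

lemma mono (hf : RightOrderGE m f) (hle : m' ≤ m) : RightOrderGE m' f := by
  obtain ⟨h, hh, he⟩ := hf
  refine ⟨fun z => z ^ (m - m').toNat * h z, (analyticAt_id.pow _).mul hh, ?_⟩
  filter_upwards [he, self_mem_nhdsWithin] with z hz (hz0 : 0 < z)
  rw [hz, ← zpow_natCast, Int.toNat_of_nonneg (by omega), mul_comm _ (h z), mul_assoc,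
    ← zpow_add₀ hz0.ne', sub_add_cancel]

lemma mul {g : ℝ → ℝ} (hf : RightOrderGE m f) (hg : RightOrderGE m' g) :
    RightOrderGE (m + m') (fun z => f z * g z) := by
  obtain ⟨h, hh, he⟩ := hf
  obtain ⟨k, hk, hke⟩ := hg
  refine ⟨fun z => h z * k z, hh.mul hk, ?_⟩
  filter_upwards [he, hke, self_mem_nhdsWithin] with z hz hz' (hz0 : 0 < z)
  rw [hz, hz', zpow_add₀ hz0.ne']
  ring

lemma eventually_eq_zero_or_exists_mul_zpow (hf : RightOrderGE m f) :
    (∀ᶠ z in 𝓝[>] (0:ℝ), f z = 0) ∨ ∃ (μ : ℤ) (w : ℝ → ℝ), m ≤ μ ∧ AnalyticAt ℝ w 0 ∧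
      w 0 ≠ 0 ∧ ∀ᶠ z in 𝓝[>] (0:ℝ), f z = w z * z ^ μ := by
  obtain ⟨h, hh, he⟩ := hf
  by_cases h0 : ∀ᶠ z in 𝓝 (0:ℝ), h z = 0
  · left
    filter_upwards [he, nhdsWithin_le_nhds h0] with z hz hz0
    rw [hz, hz0, zero_mul]
  right
  obtain ⟨N, hN⟩ := WithTop.ne_top_iff_exists.mp fun htop => h0 (analyticOrderAt_eq_top.mp htop)
  obtain ⟨w, hw, hw0, hwe⟩ := hh.analyticOrderAt_eq_natCast.mp hN.symm
  refine ⟨N + m, w, by omega, hw, hw0, ?_⟩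
  filter_upwards [he, nhdsWithin_le_nhds hwe, self_mem_nhdsWithin] with z hz hz' (hz0 : 0 < z)
  rw [hz, hz', sub_zero, smul_eq_mul, zpow_add₀ hz0.ne', zpow_natCast]
  ring

lemma exists_pos_mul_zpow (hf : RightOrderGE m f) (hpos : ∀ᶠ z in 𝓝[>] (0:ℝ), 0 < f z) :
    ∃ (ν : ℤ) (u : ℝ → ℝ), m ≤ ν ∧ AnalyticAt ℝ u 0 ∧ 0 < u 0 ∧
      ∀ᶠ z in 𝓝[>] (0:ℝ), f z = u z * z ^ ν := by
  rcases hf.eventually_eq_zero_or_exists_mul_zpow with h0 | ⟨μ, w, hμ, hw, hw0, hwe⟩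
  · obtain ⟨z, hz, hz0⟩ := (hpos.and h0).exists
    exact absurd hz (by simp [hz0])
  refine ⟨μ, w, hμ, hw, hw0.symm.lt_of_le ?_, hwe⟩
  have hwpos : ∀ᶠ z in 𝓝[>] (0:ℝ), 0 ≤ w z := by
    filter_upwards [hwe, hpos, self_mem_nhdsWithin] with z hz hfz (hz0 : 0 < z)
    rw [hz] at hfz
    exact (pos_of_mul_pos_left hfz (zpow_pos hz0 μ).le).le
  exact ge_of_tendsto (hw.continuousAt.tendsto.mono_left nhdsWithin_le_nhds) hwpos

lemma of_sq_le {ν : ℤ} {d : ℝ → ℝ} (hf : RightOrderGE m f) (hd : RightOrderGE (2 * ν) d)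
    (hle : ∀ᶠ z in 𝓝[>] (0:ℝ), f z ^ 2 ≤ d z) : RightOrderGE ν f := by
  rcases hf.eventually_eq_zero_or_exists_mul_zpow with h0 | ⟨μ, w, -, hw, hw0, hwe⟩
  · exact ⟨fun _ => 0, analyticAt_const, by filter_upwards [h0] with z hz; rw [hz, zero_mul]⟩
  obtain ⟨h, hh, he⟩ := hd
  have hsq : ∀ᶠ z in 𝓝[>] (0:ℝ), w z ^ 2 * z ^ (2 * μ) ≤ h z * z ^ (2 * ν) := by
    filter_upwards [hwe, he, hle] with z hz hz' hfz
    rwa [hz, hz', mul_pow, ← zpow_ofNat (z ^ μ), ← _root_.zpow_mul, mul_comm μ] at hfz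
  have hνμ := le_of_eventually_mul_zpow_le (hw.continuousAt.pow 2) hh.continuousAt
    (sq_pos_of_ne_zero hw0) hsq
  exact RightOrderGE.mono ⟨w, hw, hwe⟩ (by omega)

end RightOrderGE

namespace Matrix

variable {R K : Type*} [CommRing R] [Field K] {n : ℕ}

def diagCons (a : R) (A : Matrix (Fin n) (Fin n) R) : Matrix (Fin (n + 1)) (Fin (n + 1)) R :=
  of (vecCons (vecCons a 0) fun p => vecCons 0 (A p))

@[simp] lemma diagCons_zero_zero (a : R) (A : Matrix (Fin n) (Fin n) R) :
    diagCons a A 0 0 = a := rfl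
@[simp] lemma diagCons_zero_succ (a : R) (A : Matrix (Fin n) (Fin n) R) (q : Fin n) :
    diagCons a A 0 q.succ = 0 := rfl
@[simp] lemma diagCons_succ_zero (a : R) (A : Matrix (Fin n) (Fin n) R) (p : Fin n) :
    diagCons a A p.succ 0 = 0 := rfl
@[simp] lemma diagCons_succ_succ (a : R) (A : Matrix (Fin n) (Fin n) R) (p q : Fin n) :
    diagCons a A p.succ q.succ = A p q := rfl

lemma mul_diagCons_mul_transpose_apply (B C : Matrix (Fin (n + 1)) (Fin (n + 1)) R) (a : R)
    (A : Matrix (Fin n) (Fin n) R) (i j : Fin (n + 1)) :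
    (B * diagCons a A * Cᵀ) i j =
      B i 0 * a * C j 0 + ∑ p, ∑ q, B i p.succ * A p q * C j q.succ := by
  simp only [mul_apply, Fin.sum_univ_succ, transpose_apply, diagCons_zero_zero,
    diagCons_succ_zero, diagCons_zero_succ, diagCons_succ_succ, mul_zero, zero_add, add_zero,
    Finset.sum_const_zero, Finset.sum_mul, add_right_inj]
  exact Finset.sum_comm

lemma diagCons_mul_diagonal_mul_transpose (a d : R) (A : Matrix (Fin n) (Fin n) R)
    (δ : Fin n → R) :
    diagCons a A * diagonal (vecCons d δ) * (diagCons a A)ᵀ =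
      diagCons (a * d * a) (A * diagonal δ * Aᵀ) := by
  ext i j
  refine Fin.cases ?_ (fun p => ?_) i <;> refine Fin.cases ?_ (fun q => ?_) j <;>
    simp [mul_apply, Fin.sum_univ_succ, diagonal_apply]

lemma submatrix_succ_diagCons (a : R) (A : Matrix (Fin n) (Fin n) R) :
    (diagCons a A).submatrix Fin.succ Fin.succ = A := rfl

lemma det_diagCons (a : R) (A : Matrix (Fin n) (Fin n) R) : (diagCons a A).det = a * A.det := by
  rw [det_succ_row_zero, Fin.sum_univ_succ]
  simp [submatrix_succ_diagCons]

def pivotLower (M : Matrix (Fin (n + 1)) (Fin (n + 1)) K) : Matrix (Fin (n + 1)) (Fin (n + 1)) K :=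
  of fun i j => if j = 0 then M i 0 / M 0 0 else (1 : Matrix (Fin (n + 1)) (Fin (n + 1)) K) i j

def pivotSchurCompl (M : Matrix (Fin (n + 1)) (Fin (n + 1)) K) : Matrix (Fin n) (Fin n) K :=
  of fun p q => M p.succ q.succ - M p.succ 0 * M 0 q.succ / M 0 0

lemma det_pivotLower {M : Matrix (Fin (n + 1)) (Fin (n + 1)) K} (h : M 0 0 ≠ 0) :
    (pivotLower M).det = 1 := by
  rw [det_of_isLowerTriangular]
  · refine Finset.prod_eq_one fun i _ => ?_
    by_cases hi : i = 0 <;> simp [pivotLower, hi, h]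
  · intro i j (hij : i < j)
    simp [pivotLower, one_apply, hij.ne, ((Fin.zero_le i).trans_lt hij).ne']

lemma pivotLower_smul {c : K} (hc : c ≠ 0) (M : Matrix (Fin (n + 1)) (Fin (n + 1)) K) :
    pivotLower (c • M) = pivotLower M := by
  ext i j
  simp [pivotLower, mul_div_mul_left _ _ hc]

lemma pivotSchurCompl_smul {c : K} (hc : c ≠ 0) (M : Matrix (Fin (n + 1)) (Fin (n + 1)) K) :
    pivotSchurCompl (c • M) = c • pivotSchurCompl M := by
  ext p q
  simp only [pivotSchurCompl, smul_apply, of_apply, smul_eq_mul]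
  rw [mul_sub, mul_mul_mul_comm, mul_assoc c c, mul_div_mul_left _ _ hc, mul_div_assoc]

lemma eq_pivotLower_mul_diagCons_mul_transpose {M : Matrix (Fin (n + 1)) (Fin (n + 1)) K}
    (hM : Mᵀ = M) (h : M 0 0 ≠ 0) :
    M = pivotLower M * diagCons (M 0 0) (pivotSchurCompl M) * (pivotLower M)ᵀ := by
  have hsymm (q : Fin n) : M q.succ 0 = M 0 q.succ := congrFun (congrFun hM 0) q.succ
  ext i j
  rw [mul_diagCons_mul_transpose_apply]
  refine Fin.cases ?_ (fun p => ?_) i <;> refine Fin.cases ?_ (fun q => ?_) j <;>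
    simp [pivotLower, pivotSchurCompl, one_apply, h, hsymm, eq_comm (a := (0 : Fin (n + 1)))]
  all_goals field_simp
  ring

lemma PosDef.pivotSchurCompl {M : Matrix (Fin (n + 1)) (Fin (n + 1)) ℝ} (hM : M.PosDef) :
    (Matrix.pivotSchurCompl M).PosDef := by
  have h0 : M 0 0 ≠ 0 := hM.diag_pos.ne'
  have hT : Mᵀ = M := by simpa [conjTranspose_eq_transpose_of_trivial] using hM.isHermitian.eq
  have hL : IsUnit (pivotLower M) := by
    rw [isUnit_iff_isUnit_det, det_pivotLower h0]
    exact isUnit_one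
  have hD : (diagCons (M 0 0) (Matrix.pivotSchurCompl M)).PosDef := by
    rw [← hL.posDef_star_right_conjugate_iff, star_eq_conjTranspose,
      conjTranspose_eq_transpose_of_trivial, ← eq_pivotLower_mul_diagCons_mul_transpose hT h0]
    exact hM
  simpa only [submatrix_succ_diagCons] using hD.submatrix (Fin.succ_injective n)

lemma PosDef.sq_apply_le_mul_diag {ι : Type*} [Fintype ι] [DecidableEq ι] {M : Matrix ι ι ℝ}
    (hM : M.PosDef) (i j : ι) : M i j ^ 2 ≤ M i i * M j j := by
  rcases eq_or_ne i j with rfl | hij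
  · rw [sq]
  have hinj : Function.Injective ![i, j] := by
    intro a b hab
    fin_cases a <;> fin_cases b <;> simp_all [hij.symm]
  have hdet := (hM.submatrix hinj).det_pos
  have hsymm : M j i = M i j := by simpa using congrFun (congrFun hM.isHermitian.eq i) j
  rw [det_fin_two] at hdet
  simp only [submatrix_apply, Matrix.cons_val_zero, Matrix.cons_val_one, hsymm] at hdet
  nlinarith

end Matrix

lemma analyticAt_matrix_mul_apply {𝕜 : Type*} [NontriviallyNormedField 𝕜] {l m n : Type*}
    [Fintype m] {A : 𝕜 → Matrix l m 𝕜} {B : 𝕜 → Matrix m n 𝕜} {x : 𝕜}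
    (hA : ∀ i j, AnalyticAt 𝕜 (fun z => A z i j) x) (hB : ∀ i j, AnalyticAt 𝕜 (fun z => B z i j) x)
    (i : l) (k : n) : AnalyticAt 𝕜 (fun z => (A z * B z) i k) x := by
  simp only [mul_apply]
  exact Finset.analyticAt_fun_sum _ fun j _ => (hA i j).mul (hB j k)

lemma analyticAt_pivotLower_apply {n : ℕ} {H : ℝ → Matrix (Fin (n + 1)) (Fin (n + 1)) ℝ} {x : ℝ}
    (hH : ∀ i j, AnalyticAt ℝ (fun z => H z i j) x) (h0 : H x 0 0 ≠ 0) (i j : Fin (n + 1)) :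
    AnalyticAt ℝ (fun z => pivotLower (H z) i j) x := by
  by_cases hj : j = 0
  · simpa [pivotLower, hj] using (hH i 0).fun_div (hH 0 0) h0
  · simpa [pivotLower, hj] using analyticAt_const

lemma analyticAt_diagCons_apply {n : ℕ} {a : ℝ → ℝ} {A : ℝ → Matrix (Fin n) (Fin n) ℝ} {x : ℝ}
    (ha : AnalyticAt ℝ a x) (hA : ∀ i j, AnalyticAt ℝ (fun z => A z i j) x) (i j : Fin (n + 1)) :
    AnalyticAt ℝ (fun z => diagCons (a z) (A z) i j) x := by
  refine Fin.cases ?_ (fun p => ?_) i <;> refine Fin.cases ?_ (fun q => ?_) j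
  exacts [ha, analyticAt_const, analyticAt_const, hA p q]

def AnalyticCongrDiag {ι : Type*} [Fintype ι] [DecidableEq ι] (X : ℝ → Matrix ι ι ℝ)
    (κ : ι → ℤ) : Prop :=
  ∃ g : ℝ → Matrix ι ι ℝ, (∀ i j, AnalyticAt ℝ (fun z => g z i j) 0) ∧ IsUnit (g 0) ∧
    ∀ᶠ z in 𝓝[>] (0:ℝ), X z = g z * diagonal (fun i => z ^ (-(κ i))) * (g z)ᵀ

namespace AnalyticCongrDiag

lemma of_submatrix {ι : Type*} [Fintype ι] [DecidableEq ι] {X : ℝ → Matrix ι ι ℝ} {κ : ι → ℤ}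
    (σ : Equiv.Perm ι) (h : AnalyticCongrDiag (fun z => (X z).submatrix σ σ) κ) :
    AnalyticCongrDiag X κ := by
  obtain ⟨g, hga, hgu, hge⟩ := h
  refine ⟨fun z => (g z).submatrix σ.symm id, fun i j => hga _ _, ?_, ?_⟩
  · rw [isUnit_iff_isUnit_det, det_permute]
    exact ((Equiv.Perm.sign σ.symm).isUnit.map (Int.castRingHom ℝ)).mul
      ((isUnit_iff_isUnit_det _).1 hgu)
  · filter_upwards [hge] with z hz
    have := congrArg (submatrix · σ.symm σ.symm) hz
    simp only [submatrix_submatrix, Equiv.self_comp_symm, submatrix_id_id] at this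
    rw [this, submatrix_mul _ _ _ id _ Function.bijective_id,
      submatrix_mul _ _ _ id _ Function.bijective_id, transpose_submatrix]
    simp

lemma cons {n : ℕ} {Y H : ℝ → Matrix (Fin (n + 1)) (Fin (n + 1)) ℝ} {ν : ℤ} {κ : Fin n → ℤ}
    (hH : ∀ i j, AnalyticAt ℝ (fun z => H z i j) 0) (hH0 : 0 < H 0 0 0)
    (hY : ∀ᶠ z in 𝓝[>] (0:ℝ), (Y z)ᵀ = Y z ∧ Y z = z ^ ν • H z)
    (hS : AnalyticCongrDiag (fun z => pivotSchurCompl (Y z)) κ) :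
    AnalyticCongrDiag Y (vecCons (-ν) κ) := by
  obtain ⟨g, hga, hgu, hge⟩ := hS
  have hsqrt : AnalyticAt ℝ (fun z => √(H z 0 0)) 0 :=
    ((hH 0 0).contDiffAt.sqrt hH0.ne').analyticAt
  refine ⟨fun z => pivotLower (H z) * diagCons (√(H z 0 0)) (g z),
    analyticAt_matrix_mul_apply (analyticAt_pivotLower_apply hH hH0.ne')
      (analyticAt_diagCons_apply hsqrt hga), ?_, ?_⟩
  · rw [isUnit_iff_isUnit_det, det_mul, det_pivotLower hH0.ne', det_diagCons, one_mul]
    exact (Real.sqrt_pos.2 hH0).ne'.isUnit.mul ((isUnit_iff_isUnit_det _).1 hgu)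
  have hU : ∀ᶠ z in 𝓝 (0:ℝ), 0 < H z 0 0 := continuousAt_const.eventually_lt
    (hH 0 0).continuousAt hH0
  filter_upwards [hY, hge, nhdsWithin_le_nhds hU, self_mem_nhdsWithin]
    with z ⟨hsymm, hYH⟩ hgz hUz (hz : 0 < z)
  have hzν : z ^ ν ≠ 0 := (zpow_pos hz ν).ne'
  have hdiag : (fun i => z ^ (-(vecCons (-ν) κ i))) = vecCons (z ^ ν) fun p => z ^ (-(κ p)) := by
    funext i
    refine Fin.cases ?_ (fun p => ?_) i <;> simp
  have hpivot : Y z 0 0 = √(H z 0 0) * z ^ ν * √(H z 0 0) := by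
    rw [mul_right_comm, Real.mul_self_sqrt hUz.le, hYH, Matrix.smul_apply, smul_eq_mul, mul_comm]
  calc Y z = pivotLower (Y z) * diagCons (Y z 0 0) (pivotSchurCompl (Y z)) * (pivotLower (Y z))ᵀ :=
        eq_pivotLower_mul_diagCons_mul_transpose hsymm (hpivot ▸ by positivity)
    _ = pivotLower (H z) * (diagCons (√(H z 0 0)) (g z) *
          diagonal (vecCons (z ^ ν) fun p => z ^ (-(κ p))) * (diagCons (√(H z 0 0)) (g z))ᵀ) *
          (pivotLower (H z))ᵀ := by
        rw [diagCons_mul_diagonal_mul_transpose, ← hgz, ← hpivot, hYH, pivotLower_smul hzν]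
    _ = _ := by
        rw [hdiag, transpose_mul]
        simp only [Matrix.mul_assoc]

end AnalyticCongrDiag

lemma exists_perm_pivot {n : ℕ} {m : ℤ} {X : ℝ → Matrix (Fin (n + 1)) (Fin (n + 1)) ℝ}
    (hpos : ∀ᶠ z in 𝓝[>] (0:ℝ), (X z).PosDef) (hX : ∀ i j, RightOrderGE m (fun z => X z i j)) :
    ∃ (σ : Equiv.Perm (Fin (n + 1))) (ν : ℤ) (H : ℝ → Matrix (Fin (n + 1)) (Fin (n + 1)) ℝ),
      m ≤ ν ∧ (∀ i j, AnalyticAt ℝ (fun z => H z i j) 0) ∧ 0 < H 0 0 0 ∧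
      ∀ᶠ z in 𝓝[>] (0:ℝ), (X z).submatrix σ σ = z ^ ν • H z := by
  choose ν u hνm hu hu0 hue using fun i =>
    (hX i i).exists_pos_mul_zpow (hpos.mono fun z hz => hz.diag_pos (i := i))
  obtain ⟨i₀, -, hmin⟩ := Finset.exists_min_image Finset.univ ν Finset.univ_nonempty
  have hord : ∀ i j, RightOrderGE (ν i₀) (fun z => X z i j) := fun i j =>
    (hX i j).of_sq_le
      ((RightOrderGE.mul ⟨u i, hu i, hue i⟩ ⟨u j, hu j, hue j⟩).mono
        (by linarith [hmin i (Finset.mem_univ _), hmin j (Finset.mem_univ _)]))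
      (hpos.mono fun z hz => hz.sq_apply_le_mul_diag i j)
  choose H hH hHe using hord
  have hH0 : H i₀ i₀ 0 = u i₀ 0 := eq_of_eventually_mul_zpow_eq (hH i₀ i₀).continuousAt
    (hu i₀).continuousAt (by filter_upwards [hHe i₀ i₀, hue i₀] with z h h' using h ▸ h')
  let σ := Equiv.swap 0 i₀
  refine ⟨σ, ν i₀, fun z => of fun i j => H (σ i) (σ j) z, hνm i₀, fun i j => hH _ _, ?_, ?_⟩
  · simpa [σ, hH0] using hu0 i₀
  · filter_upwards [eventually_all.2 fun i => eventually_all.2 (hHe i)] with z hz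
    ext i j
    simp [hz, mul_comm]

theorem exists_antitone_analyticCongrDiag (n : ℕ) (m : ℤ) (X : ℝ → Matrix (Fin n) (Fin n) ℝ)
    (hpos : ∀ᶠ z in 𝓝[>] (0:ℝ), (X z).PosDef) (hX : ∀ i j, RightOrderGE m (fun z => X z i j)) :
    ∃ κ : Fin n → ℤ, Antitone κ ∧ (∀ i, κ i ≤ -m) ∧ AnalyticCongrDiag X κ := by
  induction n generalizing m with
  | zero =>
    refine ⟨finZeroElim, fun i => i.elim0, fun i => i.elim0, fun _ => 1, fun i => i.elim0,
      isUnit_one, Eventually.of_forall fun z => ?_⟩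
    ext i
    exact i.elim0
  | succ n ih =>
    obtain ⟨σ, ν, H, hνm, hH, hH0, hXH⟩ := exists_perm_pivot hpos hX
    set Y := fun z => (X z).submatrix σ σ
    have hYpos : ∀ᶠ z in 𝓝[>] (0:ℝ), (Y z).PosDef := hpos.mono fun z hz => hz.submatrix σ.injective
    have hS (p q : Fin n) : RightOrderGE ν (fun z => pivotSchurCompl (Y z) p q) := by
      refine ⟨fun z => pivotSchurCompl (H z) p q, ?_, ?_⟩
      · simp only [pivotSchurCompl, of_apply]
        exact (hH _ _).sub (((hH _ _).mul (hH _ _)).div (hH 0 0) hH0.ne')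
      · filter_upwards [hXH, self_mem_nhdsWithin] with z hz (hz0 : 0 < z)
        simp only [Y, hz, pivotSchurCompl_smul (zpow_pos hz0 ν).ne', Matrix.smul_apply,
          smul_eq_mul, mul_comm]
    obtain ⟨κ, hanti, hle, hκ⟩ := ih ν _ (hYpos.mono fun z hz => hz.pivotSchurCompl) hS
    refine ⟨vecCons (-ν) κ, ?_, ?_, (hκ.cons hH hH0 ?_).of_submatrix σ⟩
    · rcases n with _ | n
      · exact Subsingleton.antitone (α := Fin 1) _
      · exact hanti.vecCons (hle 0)
    · intro i
      refine Fin.cases ?_ (fun p => ?_) i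
      · simpa using hνm
      · simpa using (hle p).trans (by omega)
    · filter_upwards [hYpos, hXH] with z hz hz'
      exact ⟨by simpa [conjTranspose_eq_transpose_of_trivial] using hz.isHermitian.eq, hz'⟩

open scoped MatrixOrder in
lemma Matrix.PosSemidef.exists_eq_mul_diagonal_mul_transpose {ι : Type*} [Fintype ι]
    [DecidableEq ι] {M : Matrix ι ι ℝ} (hM : M.PosSemidef) {d : ι → ℝ} (hd : ∀ i, 0 < d i) :
    ∃ G : Matrix ι ι ℝ, M = G * diagonal d * Gᵀ := by
  set S := CFC.sqrt M
  have hS : Sᵀ = S := by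
    simpa [conjTranspose_eq_transpose_of_trivial] using
      (CFC.sqrt_nonneg M).posSemidef.isHermitian.eq
  have hone : diagonal (fun i => (√(d i))⁻¹) * diagonal d * diagonal (fun i => (√(d i))⁻¹) = 1 := by
    rw [diagonal_mul_diagonal, diagonal_mul_diagonal, ← diagonal_one]
    congr 1
    funext i
    rw [mul_right_comm, ← mul_inv, ← sq, Real.sq_sqrt (hd i).le, inv_mul_cancel₀ (hd i).ne']
  refine ⟨S * diagonal fun i => (√(d i))⁻¹, ?_⟩
  rw [transpose_mul, diagonal_transpose, hS]
  calc M = S * 1 * S := by rw [Matrix.mul_one, CFC.sqrt_mul_sqrt_self M hM.nonneg]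
    _ = _ := by rw [← hone]; simp only [Matrix.mul_assoc]

lemma exists_eventuallyEq_forall_Ioo {α : Type*} {P : ℝ → α → Prop} {g₀ : ℝ → α} {ε : ℝ}
    (h₀ : ∀ᶠ z in 𝓝[>] (0:ℝ), P z (g₀ z)) (h : ∀ z ∈ Ioo 0 ε, ∃ a, P z a) :
    ∃ g : ℝ → α, g =ᶠ[𝓝 0] g₀ ∧ ∀ z ∈ Ioo 0 ε, P z (g z) := by
  classical
  obtain ⟨δ, hδ, hδP⟩ := mem_nhdsGT_iff_exists_Ioo_subset.mp h₀
  refine ⟨fun z => if z < δ then g₀ z else if hz : ∃ a, P z a then hz.choose else g₀ z, ?_, ?_⟩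
  · filter_upwards [eventually_lt_nhds hδ] with z hz
    simp [hz]
  · intro z hz
    by_cases hzδ : z < δ
    · simpa [hzδ] using hδP ⟨hz.1, hzδ⟩
    · simpa [hzδ, h z hz] using (h z hz).choose_spec

lemma rightOrderGE_neg_of_eq_div_pow {F f : ℝ → ℝ} {k : ℕ} {ε : ℝ} (hε : 0 < ε)
    (hf : AnalyticAt ℝ f 0) (hF : ∀ z ∈ Ioo 0 ε, F z = f z / z ^ k) :
    RightOrderGE (-k) F :=
  ⟨f, hf, by
    filter_upwards [Ioo_mem_nhdsGT hε] with z hz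
    rw [hF z hz, _root_.zpow_neg, zpow_natCast, div_eq_mul_inv]⟩

/-- Every meromorphic curve of positive definite symmetric matrices (each entry a
convergent Laurent series `z^{-k}(a₀ + a₁ z + …)` on `(0,ε)`) can be written as
`X(z) = g(z)·diag(z^{-k₁},…,z^{-kₙ})·g(z)ᵀ` with `k₁ ≥ … ≥ kₙ` integers and `g`
analytic near `0` with `g(0)` invertible. -/
theorem meromorphic_curve_diagonalization (n : ℕ) (ε : ℝ) (hε : 0 < ε)
    (X : ℝ → Matrix (Fin n) (Fin n) ℝ)
    (hpos : ∀ z ∈ Set.Ioo (0:ℝ) ε, (X z).PosDef)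
    (hmer : ∀ i j : Fin n, ∃ (k : ℕ) (f : ℝ → ℝ), AnalyticAt ℝ f 0 ∧
      ∀ z ∈ Set.Ioo (0:ℝ) ε, X z i j = f z / z ^ k) :
    ∃ (κ : Fin n → ℤ), Antitone κ ∧
      ∃ g : ℝ → Matrix (Fin n) (Fin n) ℝ,
        (∀ i j : Fin n, AnalyticAt ℝ (fun z => g z i j) 0) ∧
        IsUnit (g 0) ∧
        ∀ z ∈ Set.Ioo (0:ℝ) ε,
          X z = g z * Matrix.diagonal (fun i => z ^ (-(κ i))) * (g z)ᵀ := by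
  choose k f hf hfX using hmer
  set K := Finset.univ.sup fun p : Fin n × Fin n => k p.1 p.2
  have hX (i j : Fin n) : RightOrderGE (-K) (fun z => X z i j) :=
    (rightOrderGE_neg_of_eq_div_pow hε (hf i j) (hfX i j)).mono <| by
      have : k i j ≤ K :=
        Finset.le_sup (f := fun p : Fin n × Fin n => k p.1 p.2) (Finset.mem_univ (i, j))
      omega
  obtain ⟨κ, hκ, -, g₀, hg₀, hg₀0, hXg₀⟩ := exists_antitone_analyticCongrDiag n _ X
    (eventually_of_mem (Ioo_mem_nhdsGT hε) hpos) hX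
  obtain ⟨g, hgg₀, hXg⟩ := exists_eventuallyEq_forall_Ioo
    (P := fun z G => X z = G * diagonal (fun i => z ^ (-(κ i))) * Gᵀ) hXg₀ fun z hz =>
    (hpos z hz).posSemidef.exists_eq_mul_diagonal_mul_transpose fun i => zpow_pos hz.1 _
  refine ⟨κ, hκ, g, fun i j => (hg₀ i j).congr ?_, hgg₀.eq_of_nhds ▸ hg₀0, hXg⟩
  filter_upwards [hgg₀] with z hz
  rw [hz]
end

section
/- Let μ(t) = g·diag(e^{φ_1 t},…,e^{φ_n t})·gᵀ with φ_1 ≥ … ≥ φ_n and g ∈ GL(n,ℝ), and fix a positive definite symmetric matrix A. Denote by σ_1(t) ≥ … ≥ σ_n(t) the ordered logarithms of the generalized eigenvalues of the pair (μ(t), A), i.e. σ_j(t) = ln λ_j(μ(t), A). Then for each j, lim_{t→+∞} σ_j(t)/t = φ_j. -/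
open Matrix Filter

namespace CDGG

open Polynomial

variable {n : ℕ}

/-- Conjugation invariance of the characteristic polynomial. -/
lemma charpoly_conj (P M : Matrix (Fin n) (Fin n) ℝ) (hP : IsUnit P.det) :
    (P * M * P⁻¹).charpoly = M.charpoly := by
  have h1 : P * P⁻¹ = 1 := mul_nonsing_inv P hP
  have hmap : ∀ (X Y : Matrix (Fin n) (Fin n) ℝ),
      (X * Y).map (Polynomial.C (R := ℝ)) = X.map Polynomial.C * Y.map Polynomial.C := by
    intro X Y
    exact Matrix.map_mul (f := (Polynomial.C : ℝ →+* ℝ[X]))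
  have hcm : charmatrix (P * M * P⁻¹) =
      P.map Polynomial.C * charmatrix M * (P⁻¹).map Polynomial.C := by
    rw [charmatrix, charmatrix]
    rw [mul_sub, sub_mul]
    congr 1
    · have hscal : ∀ (Y : Matrix (Fin n) (Fin n) ℝ[X]),
          Y * Matrix.scalar (Fin n) (Polynomial.X (R := ℝ)) =
            Matrix.scalar (Fin n) (Polynomial.X (R := ℝ)) * Y := by
        intro Y
        exact (Matrix.scalar_commute _ (fun r => Commute.all _ _) Y).symm
      rw [hscal, mul_assoc, ← hmap, h1]
      simp
    · simp only [RingHom.mapMatrix_apply]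
      rw [← hmap, ← hmap]
  rw [Matrix.charpoly, Matrix.charpoly, hcm, det_mul, det_mul]
  have : (P.map Polynomial.C).det * ((P⁻¹).map Polynomial.C).det = 1 := by
    rw [← det_mul, ← hmap, h1]
    simp
  calc (P.map Polynomial.C).det * (charmatrix M).det * ((P⁻¹).map Polynomial.C).det
      = (P.map Polynomial.C).det * ((P⁻¹).map Polynomial.C).det * (charmatrix M).det := by ring
    _ = (charmatrix M).det := by rw [this, one_mul]

/-- `charpoly (M*N) = charpoly (N*M)` when `M` is invertible. -/
lemma charpoly_mul_comm (M N : Matrix (Fin n) (Fin n) ℝ) (hM : IsUnit M.det) :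
    (M * N).charpoly = (N * M).charpoly := by
  have : M * (N * M) * M⁻¹ = M * N := by
    rw [mul_assoc, mul_assoc, mul_nonsing_inv _ hM, mul_one]
  rw [← this, charpoly_conj _ _ hM]

end CDGG

namespace CDGG

/-- Real spectral theorem, cleaned up. -/
lemma real_spectral {M : Matrix (Fin n) (Fin n) ℝ} (hM : M.IsHermitian) :
    ∃ U : Matrix (Fin n) (Fin n) ℝ, Uᵀ * U = 1 ∧ U * Uᵀ = 1 ∧
      M = U * diagonal hM.eigenvalues * Uᵀ := by
  refine ⟨(hM.eigenvectorUnitary : Matrix (Fin n) (Fin n) ℝ), ?_, ?_, ?_⟩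
  · have := Matrix.mem_unitaryGroup_iff'.mp hM.eigenvectorUnitary.2
    simpa [Matrix.star_eq_conjTranspose, Matrix.conjTranspose_eq_transpose_of_trivial] using this
  · have := Matrix.mem_unitaryGroup_iff.mp hM.eigenvectorUnitary.2
    simpa [Matrix.star_eq_conjTranspose, Matrix.conjTranspose_eq_transpose_of_trivial] using this
  · have := hM.spectral_theorem
    simpa [Matrix.star_eq_conjTranspose, Matrix.conjTranspose_eq_transpose_of_trivial,
      RCLike.ofReal_real_eq_id] using this

/-- charpoly roots of a real symmetric matrix are its eigenvalues. -/
lemma roots_eq_eigenvalues {M : Matrix (Fin n) (Fin n) ℝ} (hM : M.IsHermitian) :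
    M.charpoly.roots = Finset.univ.val.map hM.eigenvalues := by
  obtain ⟨U, hU1, hU2, hMe⟩ := real_spectral hM
  have hUdet : IsUnit U.det := isUnit_det_of_right_inverse hU2
  have hUinv : U⁻¹ = Uᵀ := inv_eq_left_inv hU1
  have h1 : M.charpoly = (diagonal hM.eigenvalues).charpoly := by
    conv_lhs => rw [hMe, ← hUinv]
    exact charpoly_conj _ _ hUdet
  rw [h1, charpoly_of_upperTriangular _ (blockTriangular_diagonal _)]
  have h2 : (∏ i : Fin n, (Polynomial.X - Polynomial.C (diagonal hM.eigenvalues i i)))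
      = ((Finset.univ.val.map hM.eigenvalues).map
          (fun a => Polynomial.X - Polynomial.C a)).prod := by
    rw [Finset.prod_eq_multiset_prod, Multiset.map_map]
    simp [diagonal_apply_eq]
  rw [h2, Polynomial.roots_multiset_prod_X_sub_C]

end CDGG

namespace CDGG

/-- Quadratic form of `U * diagonal ev * Uᵀ` in rotated coordinates. -/
lemma quadform_eq (U : Matrix (Fin n) (Fin n) ℝ) (hU2 : U * Uᵀ = 1)
    (ev : Fin n → ℝ) (x : Fin n → ℝ) :
    x ⬝ᵥ ((U * diagonal ev * Uᵀ) *ᵥ x) = ∑ i, ev i * ((Uᵀ *ᵥ x) i * (Uᵀ *ᵥ x) i)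
    ∧ x ⬝ᵥ x = ∑ i, ((Uᵀ *ᵥ x) i * (Uᵀ *ᵥ x) i) := by
  set y := Uᵀ *ᵥ x with hy
  have hdot : ∀ z : Fin n → ℝ, x ⬝ᵥ (U *ᵥ z) = y ⬝ᵥ z := by
    intro z
    rw [dotProduct_mulVec]
    congr 1
    rw [hy, ← Matrix.vecMul_transpose, Matrix.transpose_transpose]
  constructor
  · have : (U * diagonal ev * Uᵀ) *ᵥ x = U *ᵥ (diagonal ev *ᵥ y) := by
      rw [← Matrix.mulVec_mulVec, ← Matrix.mulVec_mulVec]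
    rw [this, hdot]
    simp [dotProduct, Matrix.mulVec_diagonal]
    exact Finset.sum_congr rfl fun i _ => by ring
  · have hx : x = U *ᵥ y := by
      rw [hy, Matrix.mulVec_mulVec, hU2, Matrix.one_mulVec]
    calc x ⬝ᵥ x = x ⬝ᵥ (U *ᵥ y) := by rw [← hx]
      _ = y ⬝ᵥ y := hdot y
      _ = ∑ i, (y i * y i) := by simp [dotProduct]

/-- Key counting lemma (Courant–Fischer style): if the Rayleigh quotient of
`M = U * diagonal ev * Uᵀ` is `≥ a` on the coordinate subspace spanned by `S`, then at least
`S.card` eigenvalues are `≥ a`. -/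
lemma count_ge (U : Matrix (Fin n) (Fin n) ℝ) (hU1 : Uᵀ * U = 1) (hU2 : U * Uᵀ = 1)
    (ev : Fin n → ℝ) (S : Finset (Fin n)) (a : ℝ)
    (hR : ∀ x : Fin n → ℝ, (∀ i ∉ S, x i = 0) →
      a * (x ⬝ᵥ x) ≤ x ⬝ᵥ ((U * diagonal ev * Uᵀ) *ᵥ x)) :
    S.card ≤ (Finset.univ.filter (fun i => a ≤ ev i)).card := by
  classical
  by_contra hlt
  push_neg at hlt
  set T := Finset.univ.filter (fun i => a ≤ ev i) with hT
  -- build the constraint linear map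
  let L1 : (Fin n → ℝ) →ₗ[ℝ] ({ i // i ∈ Sᶜ } → ℝ) :=
    (LinearMap.funLeft ℝ ℝ (fun i : { i // i ∈ Sᶜ } => (i : Fin n))).comp U.mulVecLin
  let L2 : (Fin n → ℝ) →ₗ[ℝ] ({ i // i ∈ T } → ℝ) :=
    LinearMap.funLeft ℝ ℝ (fun i : { i // i ∈ T } => (i : Fin n))
  let L := L1.prod L2
  have hker : ∃ y : Fin n → ℝ, y ≠ 0 ∧ L y = 0 := by
    by_contra h
    push_neg at h
    have hinj : Function.Injective L := by
      rw [← LinearMap.ker_eq_bot, LinearMap.ker_eq_bot']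
      intro m hm
      by_contra hm0
      exact (h m hm0) hm
    have hle := LinearMap.finrank_le_finrank_of_injective hinj
    rw [Module.finrank_fintype_fun_eq_card, Module.finrank_prod,
      Module.finrank_fintype_fun_eq_card, Module.finrank_fintype_fun_eq_card] at hle
    simp only [Fintype.card_coe, Fintype.card_fin] at hle
    have hcompl : (Sᶜ : Finset (Fin n)).card = n - S.card := by
      rw [Finset.card_compl, Fintype.card_fin]
    have hSn : S.card ≤ n := by
      simpa using Finset.card_le_card (Finset.subset_univ S)
    omega
  obtain ⟨y, hy0, hLy⟩ := hker
  have hLy1 : ∀ i : { i // i ∈ Sᶜ }, (U *ᵥ y) (i : Fin n) = 0 := by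
    intro i
    have := congrArg Prod.fst hLy
    exact congrFun this i
  have hLy2 : ∀ i ∈ T, y i = 0 := by
    intro i hi
    have := congrArg Prod.snd hLy
    exact congrFun this ⟨i, hi⟩
  set x := U *ᵥ y with hx
  have hy : Uᵀ *ᵥ x = y := by
    rw [hx, Matrix.mulVec_mulVec, hU1, Matrix.one_mulVec]
  have hsupp : ∀ i ∉ S, x i = 0 := by
    intro i hi
    exact hLy1 ⟨i, Finset.mem_compl.mpr hi⟩
  obtain ⟨hq1, hq2⟩ := quadform_eq U hU2 ev x
  rw [hy] at hq1 hq2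
  obtain ⟨j, hj⟩ : ∃ j, y j ≠ 0 := Function.ne_iff.mp hy0
  have hjT : j ∉ T := fun hjT => hj (hLy2 j hjT)
  have hja : ev j < a := by
    by_contra hja
    exact hjT (Finset.mem_filter.mpr ⟨Finset.mem_univ j, not_lt.mp hja⟩)
  have hstrict : ∑ i, ev i * (y i * y i) < ∑ i, a * (y i * y i) := by
    apply Finset.sum_lt_sum
    · intro i _
      by_cases hiT : i ∈ T
      · rw [hLy2 i hiT]; simp
      · have : ev i < a := by
          by_contra hia
          exact hiT (Finset.mem_filter.mpr ⟨Finset.mem_univ i, not_lt.mp hia⟩)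
        exact mul_le_mul_of_nonneg_right this.le (mul_self_nonneg _)
    · exact ⟨j, Finset.mem_univ j, mul_lt_mul_of_pos_right hja (mul_self_pos.mpr hj)⟩
  have hRx := hR x hsupp
  rw [hq1, hq2] at hRx
  rw [← Finset.mul_sum] at hstrict
  linarith

end CDGG

namespace CDGG

lemma ofFn_eq_map_univ (f : Fin n → ℝ) :
    (Multiset.ofList (List.ofFn f)) = Finset.univ.val.map f := by
  have : (Finset.univ.val : Multiset (Fin n)) = (List.finRange n : List (Fin n)) := by
    rfl
  rw [this, List.ofFn_eq_map]
  rfl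

lemma card_filter_eq_of_map_eq (f h : Fin n → ℝ)
    (hfh : Finset.univ.val.map f = Finset.univ.val.map h)
    (p : ℝ → Prop) [DecidablePred p] :
    (Finset.univ.filter (fun i => p (f i))).card = (Finset.univ.filter (fun i => p (h i))).card := by
  classical
  have := congrArg (Multiset.countP p) hfh
  rw [Multiset.countP_map, Multiset.countP_map] at this
  rw [Finset.card_def, Finset.card_def, Finset.filter_val, Finset.filter_val]
  exact this

/-- If an antitone tuple has at least `k+1` values `≥ a` then the `k`-th one is `≥ a`. -/
lemma antitone_ge (s : Fin n → ℝ) (hs : Antitone s) (k : Fin n) (a : ℝ)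
    (h : (k : ℕ) < (Finset.univ.filter (fun i => a ≤ s i)).card) : a ≤ s k := by
  by_contra hk
  have hsub : (Finset.univ.filter (fun i => a ≤ s i)) ⊆ Finset.Iio k := by
    intro i hi
    rw [Finset.mem_filter] at hi
    rw [Finset.mem_Iio]
    by_contra hik
    exact hk (le_trans hi.2 (hs (not_lt.mp hik)))
  have := Finset.card_le_card hsub
  rw [Fin.card_Iio] at this
  omega

/-- If an antitone tuple has at least `n - k` values `≤ b` then the `k`-th one is `≤ b`. -/
lemma antitone_le (s : Fin n → ℝ) (hs : Antitone s) (k : Fin n) (b : ℝ)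
    (h : n - 1 - (k : ℕ) < (Finset.univ.filter (fun i => s i ≤ b)).card) : s k ≤ b := by
  by_contra hk
  have hsub : (Finset.univ.filter (fun i => s i ≤ b)) ⊆ Finset.Ioi k := by
    intro i hi
    rw [Finset.mem_filter] at hi
    rw [Finset.mem_Ioi]
    by_contra hik
    exact hk (le_trans (hs (not_lt.mp hik)) hi.2)
  have := Finset.card_le_card hsub
  rw [Fin.card_Ioi] at this
  omega

end CDGG

open CDGG Real

/-- Let `μ(t) = g·diag(e^{φ₁ t},…,e^{φₙ t})·gᵀ` with `φ₁ ≥ … ≥ φₙ` and `g` invertible,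
and fix a positive definite `A`. If `σ₁(t) ≥ … ≥ σₙ(t)` denote the logarithms of the
decreasingly ordered roots of `det(μ(t) - λ A) = 0` (the eigenvalues of `A⁻¹ μ(t)`),
then for each `j`, `σⱼ(t)/t → φⱼ` as `t → +∞`. -/
theorem complex_distance_growth_along_geodesic (n : ℕ)
    (φ : Fin n → ℝ) (hφ : Antitone φ)
    (g : Matrix (Fin n) (Fin n) ℝ) (hg : IsUnit g)
    (μ : ℝ → Matrix (Fin n) (Fin n) ℝ)
    (hμ : ∀ t, μ t = g * Matrix.diagonal (fun i => Real.exp (φ i * t)) * gᵀ)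
    (A : Matrix (Fin n) (Fin n) ℝ) (hA : A.PosDef)
    (σ : ℝ → Fin n → ℝ)
    (hσa : ∀ t, Antitone (σ t))
    (hσ : ∀ t, Multiset.ofList (List.ofFn fun j => Real.exp (σ t j))
            = (A⁻¹ * μ t).charpoly.roots) :
    ∀ j : Fin n, Tendsto (fun t => σ t j / t) atTop (nhds (φ j)) := by
  classical
  intro j
  have hn : 0 < n := j.pos
  have huniv : (Finset.univ : Finset (Fin n)).Nonempty := ⟨j, Finset.mem_univ j⟩
  have hgdet : IsUnit g.det := (Matrix.isUnit_iff_isUnit_det g).mp hg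
  have hAinv : (A⁻¹).PosDef := hA.inv
  set B := gᵀ * A⁻¹ * g with hBdef
  -- B is positive definite
  have hB : B.PosDef := by
    refine Matrix.PosDef.of_dotProduct_mulVec_pos ?_ ?_
    · show Bᴴ = B
      rw [Matrix.conjTranspose_eq_transpose_of_trivial]
      rw [hBdef, Matrix.transpose_mul, Matrix.transpose_mul, Matrix.transpose_transpose]
      have hAs : (A⁻¹)ᵀ = A⁻¹ := by
        rw [← Matrix.conjTranspose_eq_transpose_of_trivial]
        exact hAinv.isHermitian
      rw [hAs, mul_assoc]
    · intro x hx
      have hgx : g *ᵥ x ≠ 0 := by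
        intro h0
        apply hx
        have : g⁻¹ *ᵥ (g *ᵥ x) = x := by
          rw [Matrix.mulVec_mulVec, Matrix.nonsing_inv_mul g hgdet, Matrix.one_mulVec]
        rw [← this, h0, Matrix.mulVec_zero]
      have hpos := hAinv.dotProduct_mulVec_pos hgx
      have heq : dotProduct (star x) (B *ᵥ x)
          = dotProduct (star (g *ᵥ x)) (A⁻¹ *ᵥ (g *ᵥ x)) := by
        simp only [star_trivial]
        rw [hBdef, ← Matrix.mulVec_mulVec, ← Matrix.mulVec_mulVec,
          dotProduct_mulVec, Matrix.vecMul_transpose]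
      rw [heq]
      exact hpos
  set bev := hB.1.eigenvalues with hbevdef
  have hbevpos : ∀ i, 0 < bev i := hB.eigenvalues_pos
  set c := Finset.univ.inf' huniv bev with hcdef
  set Cc := Finset.univ.sup' huniv bev with hCdef
  have hc : 0 < c := (Finset.lt_inf'_iff huniv).mpr fun i _ => hbevpos i
  have hC : 0 < Cc := lt_of_lt_of_le (hbevpos j) (Finset.le_sup' bev (Finset.mem_univ j))
  obtain ⟨V, hV1, hV2, hBe⟩ := real_spectral hB.1
  -- quadratic form bounds for B
  have hBlow : ∀ w : Fin n → ℝ, c * (w ⬝ᵥ w) ≤ w ⬝ᵥ (B *ᵥ w) := by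
    intro w
    obtain ⟨q1, q2⟩ := quadform_eq V hV2 bev w
    rw [← hBe] at q1
    rw [q1, q2, Finset.mul_sum]
    apply Finset.sum_le_sum
    intro i _
    exact mul_le_mul_of_nonneg_right (Finset.inf'_le bev (Finset.mem_univ i))
      (mul_self_nonneg _)
  have hBhigh : ∀ w : Fin n → ℝ, w ⬝ᵥ (B *ᵥ w) ≤ Cc * (w ⬝ᵥ w) := by
    intro w
    obtain ⟨q1, q2⟩ := quadform_eq V hV2 bev w
    rw [← hBe] at q1
    rw [q1, q2, Finset.mul_sum]
    apply Finset.sum_le_sum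
    intro i _
    exact mul_le_mul_of_nonneg_right (Finset.le_sup' bev (Finset.mem_univ i))
      (mul_self_nonneg _)
  -- the key two-sided bound, for every t ≥ 0
  have key : ∀ t : ℝ, 0 ≤ t →
      Real.log c + φ j * t ≤ σ t j ∧ σ t j ≤ Real.log Cc + φ j * t := by
    intro t ht
    set e : Fin n → ℝ := fun i => Real.exp (φ i * t / 2) with hedef
    set Dh := Matrix.diagonal e with hDhdef
    set H := Dh * B * Dh with hHdef
    have hDht : Dhᵀ = Dh := Matrix.diagonal_transpose e
    have hBt : Bᵀ = B := by
      rw [← Matrix.conjTranspose_eq_transpose_of_trivial]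
      exact hB.1
    have hHh : H.IsHermitian := by
      show Hᴴ = H
      rw [Matrix.conjTranspose_eq_transpose_of_trivial]
      calc Hᵀ = (Dh * B * Dh)ᵀ := by rw [hHdef]
        _ = Dhᵀ * (Bᵀ * Dhᵀ) := by
              rw [Matrix.transpose_mul, Matrix.transpose_mul]
        _ = Dh * B * Dh := by rw [hDht, hBt, ← mul_assoc]
        _ = H := hHdef.symm
    set hev := hHh.eigenvalues with hevdef
    obtain ⟨U, hU1, hU2, hHe⟩ := real_spectral hHh
    -- charpoly identification
    have hDh2 : Dh * Dh = Matrix.diagonal (fun i => Real.exp (φ i * t)) := by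
      have harg : (fun i => e i * e i) = (fun i => Real.exp (φ i * t)) := by
        funext i
        show Real.exp (φ i * t / 2) * Real.exp (φ i * t / 2) = Real.exp (φ i * t)
        rw [← Real.exp_add]
        congr 1
        ring
      rw [hDhdef, Matrix.diagonal_mul_diagonal, harg]
    have hDhdet : IsUnit Dh.det := by
      rw [hDhdef, Matrix.det_diagonal]
      exact isUnit_iff_ne_zero.mpr (ne_of_gt (Finset.prod_pos fun i _ => Real.exp_pos _))
    have hAdet : IsUnit (A⁻¹).det := (Matrix.isUnit_iff_isUnit_det _).mp hAinv.isUnit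
    have hMdet : IsUnit (A⁻¹ * g * Dh).det := by
      rw [Matrix.det_mul, Matrix.det_mul]
      exact (hAdet.mul hgdet).mul hDhdet
    have hchar : (A⁻¹ * μ t).charpoly = H.charpoly := by
      have h1 : A⁻¹ * μ t = (A⁻¹ * g * Dh) * (Dh * gᵀ) := by
        rw [hμ t, ← hDh2]
        noncomm_ring
      have h2 : (Dh * gᵀ) * (A⁻¹ * g * Dh) = H := by
        rw [hHdef, hBdef]
        noncomm_ring
      rw [h1, charpoly_mul_comm _ _ hMdet, h2]
    have hmap : Finset.univ.val.map (fun i => Real.exp (σ t i)) = Finset.univ.val.map hev := by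
      rw [← ofFn_eq_map_univ, hσ t, hchar]
      exact roots_eq_eigenvalues hHh
    have hexpanti : Antitone (fun i => Real.exp (σ t i)) :=
      fun a b hab => Real.exp_le_exp.mpr (hσa t hab)
    -- quadratic form of H
    have hsym_dot : ∀ x z : Fin n → ℝ, x ⬝ᵥ (Dh *ᵥ z) = (Dh *ᵥ x) ⬝ᵥ z := by
      intro x z
      rw [dotProduct_mulVec]
      congr 1
      conv_lhs => rw [← hDht]
      rw [Matrix.vecMul_transpose]
    have hH_eq : ∀ x : Fin n → ℝ, x ⬝ᵥ (H *ᵥ x) = (Dh *ᵥ x) ⬝ᵥ (B *ᵥ (Dh *ᵥ x)) := by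
      intro x
      rw [hHdef, ← Matrix.mulVec_mulVec, ← Matrix.mulVec_mulVec, hsym_dot]
    constructor
    -- LOWER BOUND
    · have hRlow : ∀ x : Fin n → ℝ, (∀ i ∉ Finset.Iic j, x i = 0) →
          (c * Real.exp (φ j * t)) * (x ⬝ᵥ x) ≤ x ⬝ᵥ ((U * Matrix.diagonal hev * Uᵀ) *ᵥ x) := by
        intro x hx
        rw [← hHe, hH_eq]
        have h2 : Real.exp (φ j * t) * (x ⬝ᵥ x) ≤ (Dh *ᵥ x) ⬝ᵥ (Dh *ᵥ x) := by
          simp only [hDhdef, dotProduct, Matrix.mulVec_diagonal]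
          rw [Finset.mul_sum]
          apply Finset.sum_le_sum
          intro i _
          by_cases hxi : x i = 0
          · simp [hxi]
          · have hiS : i ∈ Finset.Iic j := by
              by_contra h
              exact hxi (hx i h)
            have hij : i ≤ j := Finset.mem_Iic.mp hiS
            have hphi : φ j * t ≤ φ i * t := mul_le_mul_of_nonneg_right (hφ hij) ht
            have he1 : Real.exp (φ j * t / 2) ≤ e i := by
              show Real.exp (φ j * t / 2) ≤ Real.exp (φ i * t / 2)
              exact Real.exp_le_exp.mpr (by linarith)
            have he2 : (0:ℝ) < Real.exp (φ j * t / 2) := Real.exp_pos _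
            have hsplit : Real.exp (φ j * t)
                = Real.exp (φ j * t / 2) * Real.exp (φ j * t / 2) := by
              rw [← Real.exp_add]; congr 1; ring
            rw [hsplit]
            have hsq : Real.exp (φ j * t / 2) * Real.exp (φ j * t / 2) ≤ e i * e i :=
              mul_le_mul he1 he1 he2.le (le_trans he2.le he1)
            calc Real.exp (φ j * t / 2) * Real.exp (φ j * t / 2) * (x i * x i)
                ≤ (e i * e i) * (x i * x i) :=
                  mul_le_mul_of_nonneg_right hsq (mul_self_nonneg _)
              _ = e i * x i * (e i * x i) := by ring
        calc (c * Real.exp (φ j * t)) * (x ⬝ᵥ x)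
            = c * (Real.exp (φ j * t) * (x ⬝ᵥ x)) := by ring
          _ ≤ c * ((Dh *ᵥ x) ⬝ᵥ (Dh *ᵥ x)) := mul_le_mul_of_nonneg_left h2 hc.le
          _ ≤ _ := hBlow _
      have hcount := count_ge U hU1 hU2 hev (Finset.Iic j) (c * Real.exp (φ j * t)) hRlow
      rw [Fin.card_Iic] at hcount
      have htrans := card_filter_eq_of_map_eq (fun i => Real.exp (σ t i)) hev hmap
        (fun r => c * Real.exp (φ j * t) ≤ r)
      have hge : c * Real.exp (φ j * t) ≤ Real.exp (σ t j) := by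
        apply antitone_ge _ hexpanti j
        rw [htrans]
        omega
      have := Real.log_le_log (by positivity) hge
      rwa [Real.log_mul hc.ne' (Real.exp_ne_zero _), Real.log_exp, Real.log_exp] at this
    -- UPPER BOUND
    · have hHe' : -H = U * Matrix.diagonal (fun i => -hev i) * Uᵀ := by
        have : Matrix.diagonal (fun i => -hev i) = -Matrix.diagonal hev := by
          rw [← Matrix.diagonal_neg]
        rw [this, mul_neg, neg_mul, ← hHe]
      have hRhigh : ∀ x : Fin n → ℝ, (∀ i ∉ Finset.Ici j, x i = 0) →
          (-(Cc * Real.exp (φ j * t))) * (x ⬝ᵥ x)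
            ≤ x ⬝ᵥ ((U * Matrix.diagonal (fun i => -hev i) * Uᵀ) *ᵥ x) := by
        intro x hx
        rw [← hHe', Matrix.neg_mulVec, dotProduct_neg, neg_mul, neg_le_neg_iff]
        rw [hH_eq]
        have h2 : (Dh *ᵥ x) ⬝ᵥ (Dh *ᵥ x) ≤ Real.exp (φ j * t) * (x ⬝ᵥ x) := by
          simp only [hDhdef, dotProduct, Matrix.mulVec_diagonal]
          rw [Finset.mul_sum]
          apply Finset.sum_le_sum
          intro i _
          by_cases hxi : x i = 0
          · simp [hxi]
          · have hiS : i ∈ Finset.Ici j := by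
              by_contra h
              exact hxi (hx i h)
            have hij : j ≤ i := Finset.mem_Ici.mp hiS
            have hphi : φ i * t ≤ φ j * t := mul_le_mul_of_nonneg_right (hφ hij) ht
            have he1 : e i ≤ Real.exp (φ j * t / 2) := by
              show Real.exp (φ i * t / 2) ≤ Real.exp (φ j * t / 2)
              exact Real.exp_le_exp.mpr (by linarith)
            have he2 : (0:ℝ) < e i := Real.exp_pos _
            have hsplit : Real.exp (φ j * t)
                = Real.exp (φ j * t / 2) * Real.exp (φ j * t / 2) := by
              rw [← Real.exp_add]; congr 1; ring
            rw [hsplit]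
            have hsq : e i * e i ≤ Real.exp (φ j * t / 2) * Real.exp (φ j * t / 2) :=
              mul_le_mul he1 he1 he2.le (Real.exp_pos _).le
            calc e i * x i * (e i * x i) = (e i * e i) * (x i * x i) := by ring
              _ ≤ Real.exp (φ j * t / 2) * Real.exp (φ j * t / 2) * (x i * x i) :=
                  mul_le_mul_of_nonneg_right hsq (mul_self_nonneg _)
        calc (Dh *ᵥ x) ⬝ᵥ (B *ᵥ (Dh *ᵥ x))
            ≤ Cc * ((Dh *ᵥ x) ⬝ᵥ (Dh *ᵥ x)) := hBhigh _
          _ ≤ Cc * (Real.exp (φ j * t) * (x ⬝ᵥ x)) := mul_le_mul_of_nonneg_left h2 hC.le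
          _ = (Cc * Real.exp (φ j * t)) * (x ⬝ᵥ x) := by ring
      have hcount := count_ge U hU1 hU2 (fun i => -hev i) (Finset.Ici j)
        (-(Cc * Real.exp (φ j * t))) hRhigh
      rw [Fin.card_Ici] at hcount
      have hfilter : (Finset.univ.filter (fun i => -(Cc * Real.exp (φ j * t)) ≤ -hev i))
          = (Finset.univ.filter (fun i => hev i ≤ Cc * Real.exp (φ j * t))) := by
        apply Finset.filter_congr
        intro i _
        simp
      rw [hfilter] at hcount
      have htrans := card_filter_eq_of_map_eq (fun i => Real.exp (σ t i)) hev hmap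
        (fun r => r ≤ Cc * Real.exp (φ j * t))
      have hle : Real.exp (σ t j) ≤ Cc * Real.exp (φ j * t) := by
        apply antitone_le _ hexpanti j
        rw [htrans]
        have := j.isLt
        omega
      have := Real.log_le_log (Real.exp_pos _) hle
      rwa [Real.log_mul hC.ne' (Real.exp_ne_zero _), Real.log_exp, Real.log_exp] at this
  -- conclusion via squeeze
  have l1 : Tendsto (fun t : ℝ => Real.log c / t + φ j) atTop (nhds (φ j)) := by
    have h0 : Tendsto (fun t : ℝ => Real.log c / t) atTop (nhds 0) :=
      Tendsto.div_atTop tendsto_const_nhds tendsto_id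
    simpa using h0.add tendsto_const_nhds
  have l2 : Tendsto (fun t : ℝ => Real.log Cc / t + φ j) atTop (nhds (φ j)) := by
    have h0 : Tendsto (fun t : ℝ => Real.log Cc / t) atTop (nhds 0) :=
      Tendsto.div_atTop tendsto_const_nhds tendsto_id
    simpa using h0.add tendsto_const_nhds
  apply tendsto_of_tendsto_of_tendsto_of_le_of_le' l1 l2
  · filter_upwards [eventually_ge_atTop (1:ℝ)] with t ht
    have ht0 : (0:ℝ) < t := lt_of_lt_of_le one_pos ht
    have h1 := (key t ht0.le).1
    have : (Real.log c + φ j * t) / t ≤ σ t j / t := by gcongr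
    rwa [add_div, mul_div_assoc, div_self ht0.ne', mul_one] at this
  · filter_upwards [eventually_ge_atTop (1:ℝ)] with t ht
    have ht0 : (0:ℝ) < t := lt_of_lt_of_le one_pos ht
    have h2 := (key t ht0.le).2
    have : σ t j / t ≤ (Real.log Cc + φ j * t) / t := by gcongr
    rwa [add_div, mul_div_assoc, div_self ht0.ne', mul_one] at this
end
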